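/- arXiv:2411.01405 — 9 statements merged into one kernel-verified Lean document; each statement's English description precedes it below -/
import Mathlib

section
/- Let p ≤ k be positive integers, let ρ ≥ 1 be a real number, let v¹,…,vⁿ ∈ ℝ^p, and let m ∈ ℤⁿ with mᵢ ≥ 0 and Σᵢ mᵢ = k. Set S = Σᵢ mᵢ vⁱ(vⁱ)ᵀ and assume S is invertible. Suppose that for every index i with mᵢ > 0 and every j ∈ {1,…,n} one has det(S − vⁱ(vⁱ)ᵀ + vʲ(vʲ)ᵀ) ≤ ρ·det(S). Then for every λ ∈ ℝⁿ with λᵢ ≥ 0 and Σᵢ λᵢ = k, one has det(Σᵢ λᵢ vⁱ(vⁱ)ᵀ) · ((k−p+1)/k · p/(p + k(ρ−1)))^p ≤ det(S). -/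
open Matrix

/-!
Write `A = S⁻¹` and `tⱼ = vⱼᵀ A vⱼ`. By the matrix determinant lemma, exchanging `vᵢ` for `vⱼ`
multiplies `det S` by `(1 - tᵢ)(1 + tⱼ) + (vᵢᵀ A vⱼ)²`, so local optimality bounds this by `ρ`
whenever `mᵢ > 0`. Averaging over `i` with weights `mᵢ`, and using `Σ mᵢ tᵢ = tr (A S) = p` and
`Σ mᵢ (vᵢᵀ A vⱼ)² = vⱼᵀ A S A vⱼ = tⱼ`, gives `(k - p + 1) tⱼ ≤ p + k (ρ - 1)`.
For a fractional design `L = Σ λᵢ vᵢ vᵢᵀ`, AM-GM on the eigenvalues of `A^{1/2} L A^{1/2}` gives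
`det L ≤ det S · (tr (A L) / p)^p`, and `tr (A L) = Σ λᵢ tᵢ` is controlled by the bound on the `tⱼ`.
-/

theorem Real.prod_le_sum_div_card_pow {ι : Type*} [Fintype ι] {z : ι → ℝ} (hz : ∀ i, 0 ≤ z i) :
    ∏ i, z i ≤ ((∑ i, z i) / Fintype.card ι) ^ Fintype.card ι := by
  rcases isEmpty_or_nonempty ι with _ | _
  · simp
  have hgm := Real.geom_mean_le_arith_mean_weighted Finset.univ (fun _ => (Fintype.card ι : ℝ)⁻¹) z
    (fun _ _ => by positivity) (by simp [Finset.card_univ]) (fun i _ => hz i)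
  rw [Real.finsetProd_rpow _ _ (fun i _ => hz i), ← Finset.mul_sum, inv_mul_eq_div] at hgm
  calc ∏ i, z i = ((∏ i, z i) ^ (Fintype.card ι : ℝ)⁻¹) ^ Fintype.card ι :=
        (Real.rpow_inv_natCast_pow (Finset.prod_nonneg fun i _ => hz i) Fintype.card_ne_zero).symm
    _ ≤ _ := pow_le_pow_left₀ (Real.rpow_nonneg (Finset.prod_nonneg fun i _ => hz i) _) hgm _

theorem Matrix.PosSemidef.det_le_trace_div_card_pow {n : Type*} [Fintype n] [DecidableEq n]
    {M : Matrix n n ℝ} (hM : M.PosSemidef) :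
    M.det ≤ (M.trace / Fintype.card n) ^ Fintype.card n := by
  rw [hM.1.det_eq_prod_eigenvalues, hM.1.trace_eq_sum_eigenvalues]
  simpa using Real.prod_le_sum_div_card_pow hM.eigenvalues_nonneg

theorem Matrix.PosSemidef.det_le_of_trace_inv_mul_le {n : Type*} [Fintype n] [DecidableEq n]
    {S L : Matrix n n ℝ} (hS : S.PosDef) (hL : L.PosSemidef) {T : ℝ}
    (hT : (S⁻¹ * L).trace ≤ T) :
    L.det ≤ S.det * (T / Fintype.card n) ^ Fintype.card n := by
  open scoped MatrixOrder in
  obtain ⟨B, hB, hBB⟩ : ∃ B : Matrix n n ℝ, B.IsHermitian ∧ B * B = S⁻¹ :=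
    ⟨CFC.sqrt S⁻¹, (CFC.sqrt_nonneg _).posSemidef.1,
      CFC.sqrt_mul_sqrt_self _ hS.inv.posSemidef.nonneg⟩
  have hM : (B * L * B).PosSemidef := by
    simpa only [hB.eq] using hL.mul_mul_conjTranspose_same B
  have hdet : L.det = S.det * (B * L * B).det := by
    rw [det_mul, det_mul, mul_right_comm, ← det_mul, hBB, ← mul_assoc, ← det_mul,
      mul_nonsing_inv _ ((isUnit_iff_isUnit_det S).mp hS.isUnit), det_one, one_mul]
  have htr : (B * L * B).trace = (S⁻¹ * L).trace := by
    rw [trace_mul_cycle, hBB]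
  have htr_nonneg : 0 ≤ (S⁻¹ * L).trace := htr ▸ hM.trace_nonneg
  calc L.det = S.det * (B * L * B).det := hdet
    _ ≤ S.det * ((S⁻¹ * L).trace / Fintype.card n) ^ Fintype.card n :=
      htr ▸ mul_le_mul_of_nonneg_left hM.det_le_trace_div_card_pow hS.det_pos.le
    _ ≤ S.det * (T / Fintype.card n) ^ Fintype.card n := by
      have hSdet := hS.det_pos
      gcongr

theorem Matrix.det_sub_vecMulVec_add_vecMulVec {m R : Type*} [Fintype m] [DecidableEq m]
    [CommRing R] {S : Matrix m m R} (hS : IsUnit S.det) (a b : m → R) :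
    (S - vecMulVec a a + vecMulVec b b).det = S.det *
      ((1 - a ⬝ᵥ S⁻¹ *ᵥ a) * (1 + b ⬝ᵥ S⁻¹ *ᵥ b) + (a ⬝ᵥ S⁻¹ *ᵥ b) * (b ⬝ᵥ S⁻¹ *ᵥ a)) := by
  let U : Matrix m (Fin 2) R := (of ![-a, b])ᵀ
  let V : Matrix (Fin 2) m R := of ![a, b]
  have hUV : S - vecMulVec a a + vecMulVec b b = S + U * V := by
    ext r c
    simp [U, V, mul_apply, Fin.sum_univ_two, vecMulVec_apply]
    ring
  have hVU : 1 + V * S⁻¹ * U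
      = !![1 - a ⬝ᵥ S⁻¹ *ᵥ a, a ⬝ᵥ S⁻¹ *ᵥ b; -(b ⬝ᵥ S⁻¹ *ᵥ a), 1 + b ⬝ᵥ S⁻¹ *ᵥ b] := by
    ext i j
    fin_cases i <;> fin_cases j <;>
      simp [U, V, mul_apply, dotProduct, vecMul, sub_eq_add_neg] <;> simp [mulVec, dotProduct]
  rw [hUV, det_add_mul U V hS, hVU, det_fin_two_of]
  ring

theorem Matrix.IsSymm.dotProduct_mulVec_comm {n R : Type*} [Fintype n] [CommRing R]
    {A : Matrix n n R} (hA : A.IsSymm) (x y : n → R) :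
    x ⬝ᵥ A *ᵥ y = y ⬝ᵥ A *ᵥ x := by
  rw [dotProduct_mulVec, ← mulVec_transpose, hA.eq, dotProduct_comm]

section Design

variable {ι n R : Type*} [Fintype ι] [CommRing R]

def designMatrix (w : ι → R) (v : ι → n → R) : Matrix n n R :=
  ∑ i, w i • vecMulVec (v i) (v i)

theorem designMatrix_isSymm (w : ι → R) (v : ι → n → R) : (designMatrix w v).IsSymm := by
  simp [IsSymm, designMatrix, transpose_sum, transpose_smul, transpose_vecMulVec]

variable [Fintype n]

theorem trace_mul_designMatrix (A : Matrix n n R) (w : ι → R) (v : ι → n → R) :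
    (A * designMatrix w v).trace = ∑ i, w i * (v i ⬝ᵥ A *ᵥ v i) := by
  simp only [designMatrix, Matrix.mul_sum, trace_sum, Matrix.mul_smul, trace_smul, mul_vecMulVec,
    trace_vecMulVec, dotProduct_comm, smul_eq_mul]

theorem dotProduct_designMatrix_mulVec (w : ι → R) (v : ι → n → R) (x : n → R) :
    x ⬝ᵥ designMatrix w v *ᵥ x = ∑ i, w i * (v i ⬝ᵥ x) ^ 2 := by
  rw [dotProduct_comm]
  simp only [designMatrix, sum_mulVec, sum_dotProduct, smul_mulVec, vecMulVec_mulVec,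
    op_smul_eq_smul, smul_dotProduct, smul_eq_mul]
  exact Finset.sum_congr rfl fun i _ => by ring

variable [DecidableEq n]

theorem sum_mul_dotProduct_designMatrix_inv_mulVec_self {w : ι → R} {v : ι → n → R}
    (hS : IsUnit (designMatrix w v).det) :
    ∑ i, w i * (v i ⬝ᵥ (designMatrix w v)⁻¹ *ᵥ v i) = Fintype.card n := by
  rw [← trace_mul_designMatrix, nonsing_inv_mul _ hS, trace_one]

theorem sum_mul_dotProduct_designMatrix_inv_mulVec_sq {w : ι → R} {v : ι → n → R}
    (hS : IsUnit (designMatrix w v).det) (u : n → R) :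
    ∑ i, w i * (v i ⬝ᵥ (designMatrix w v)⁻¹ *ᵥ u) ^ 2 = u ⬝ᵥ (designMatrix w v)⁻¹ *ᵥ u := by
  rw [← dotProduct_designMatrix_mulVec, mulVec_mulVec, mul_nonsing_inv _ hS, one_mulVec,
    dotProduct_comm]

end Design

section RealDesign

variable {ι n : Type*} [Fintype ι] [Fintype n]

theorem posSemidef_designMatrix {w : ι → ℝ} (hw : ∀ i, 0 ≤ w i) (v : ι → n → ℝ) :
    (designMatrix w v).PosSemidef :=
  posSemidef_sum _ fun i _ => by
    simpa using (posSemidef_vecMulVec_self_star (v i)).smul (hw i)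

variable [DecidableEq n]

def IsApproxLocalOpt (ρ : ℝ) (w : ι → ℝ) (v : ι → n → ℝ) : Prop :=
  ∀ i, 0 < w i → ∀ j, (designMatrix w v - vecMulVec (v i) (v i) + vecMulVec (v j) (v j)).det ≤
    ρ * (designMatrix w v).det

namespace IsApproxLocalOpt

variable {ρ : ℝ} {w : ι → ℝ} {v : ι → n → ℝ}

theorem exchange_le (hloc : IsApproxLocalOpt ρ w v) (hw : ∀ i, 0 ≤ w i)
    (hS : IsUnit (designMatrix w v).det) {i : ι} (hi : 0 < w i) (j : ι) :
    (1 - v i ⬝ᵥ (designMatrix w v)⁻¹ *ᵥ v i) * (1 + v j ⬝ᵥ (designMatrix w v)⁻¹ *ᵥ v j) +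
      (v i ⬝ᵥ (designMatrix w v)⁻¹ *ᵥ v j) ^ 2 ≤ ρ := by
  have hdet : 0 < (designMatrix w v).det :=
    ((posSemidef_designMatrix hw v).posDef_iff_det_ne_zero.mpr hS.ne_zero).det_pos
  have h := hloc i hi j
  rw [det_sub_vecMulVec_add_vecMulVec hS,
    (designMatrix_isSymm w v).inv.dotProduct_mulVec_comm (v j) (v i), ← sq, mul_comm ρ] at h
  exact le_of_mul_le_mul_left h hdet

theorem mul_dotProduct_inv_mulVec_le (hloc : IsApproxLocalOpt ρ w v) (hw : ∀ i, 0 ≤ w i)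
    {k : ℝ} (hk : ∑ i, w i = k) (hS : IsUnit (designMatrix w v).det) (j : ι) :
    (k - Fintype.card n + 1) * (v j ⬝ᵥ (designMatrix w v)⁻¹ *ᵥ v j) ≤
      Fintype.card n + k * (ρ - 1) := by
  set t := fun i => v i ⬝ᵥ (designMatrix w v)⁻¹ *ᵥ v i
  have hsum : ∑ i, w i * ((1 - t i) * (1 + t j) + (v i ⬝ᵥ (designMatrix w v)⁻¹ *ᵥ v j) ^ 2) ≤
      ∑ i, w i * ρ := by
    refine Finset.sum_le_sum fun i _ => ?_
    rcases (hw i).eq_or_lt with hi | hi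
    · simp [← hi]
    · exact mul_le_mul_of_nonneg_left (hloc.exchange_le hw hS hi j) hi.le
  have hexpand : ∑ i, w i * ((1 - t i) * (1 + t j) + (v i ⬝ᵥ (designMatrix w v)⁻¹ *ᵥ v j) ^ 2) =
      (k - Fintype.card n) * (1 + t j) + t j := by
    simp only [mul_add, Finset.sum_add_distrib, ← mul_assoc, ← Finset.sum_mul, mul_one_sub,
      Finset.sum_sub_distrib, hk, sum_mul_dotProduct_designMatrix_inv_mulVec_self hS,
      sum_mul_dotProduct_designMatrix_inv_mulVec_sq hS, t]
  rw [hexpand, ← Finset.sum_mul, hk] at hsum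
  linarith

end IsApproxLocalOpt

end RealDesign

/-- Theorem 1 of the paper: a ρ-approximate local optimum of the D-optimal design
problem is within a factor of the optimum of the continuous relaxation. -/
theorem approx_local_search_guarantee
    (p k n : ℕ) (hp : 0 < p) (hpk : p ≤ k) (ρ : ℝ) (hρ : 1 ≤ ρ)
    (v : Fin n → Fin p → ℝ) (m : Fin n → ℤ) (hm : ∀ i, 0 ≤ m i)
    (hmk : ∑ i, m i = (k : ℤ))
    (S : Matrix (Fin p) (Fin p) ℝ)
    (hS : S = ∑ i, (m i : ℝ) • vecMulVec (v i) (v i))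
    (hSinv : IsUnit S.det)
    (hlocal : ∀ i, 0 < m i → ∀ j,
      (S - vecMulVec (v i) (v i) + vecMulVec (v j) (v j)).det ≤ ρ * S.det) :
    ∀ lam : Fin n → ℝ, (∀ i, 0 ≤ lam i) → (∑ i, lam i) = (k : ℝ) →
      (∑ i, lam i • vecMulVec (v i) (v i)).det *
        (((k : ℝ) - p + 1) / k * (p / (p + k * (ρ - 1)))) ^ p ≤ S.det := by
  intro lam hlam hlamk
  change S = designMatrix (fun i => (m i : ℝ)) v at hS
  subst hS
  have hw : ∀ i, (0 : ℝ) ≤ m i := fun i => by exact_mod_cast hm i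
  have hloc : IsApproxLocalOpt ρ (fun i => (m i : ℝ)) v :=
    fun i hi => hlocal i (Int.cast_pos.mp hi)
  have hkp : (0 : ℝ) < k - p + 1 := by linarith [(Nat.cast_le (α := ℝ)).mpr hpk]
  set τ : ℝ := (p + k * (ρ - 1)) / (k - p + 1) with hτ
  have hlev : ∀ j, v j ⬝ᵥ (designMatrix (fun i => (m i : ℝ)) v)⁻¹ *ᵥ v j ≤ τ := fun j =>
    (le_div_iff₀' hkp).mpr <| by
      simpa using hloc.mul_dotProduct_inv_mulVec_le hw (k := k) (by exact_mod_cast hmk) hSinv j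
  have htrace : ((designMatrix (fun i => (m i : ℝ)) v)⁻¹ * designMatrix lam v).trace ≤ k * τ := by
    rw [trace_mul_designMatrix, ← hlamk, Finset.sum_mul]
    exact Finset.sum_le_sum fun j _ => mul_le_mul_of_nonneg_left (hlev j) (hlam j)
  have hdet := (posSemidef_designMatrix hlam v).det_le_of_trace_inv_mul_le
    ((posSemidef_designMatrix hw v).posDef_iff_det_ne_zero.mpr hSinv.ne_zero) htrace
  rw [Fintype.card_fin] at hdet
  have hk : (0 : ℝ) < k := by exact_mod_cast hp.trans_le hpk
  have hρk : (0 : ℝ) < p + k * (ρ - 1) :=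
    add_pos_of_pos_of_nonneg (by exact_mod_cast hp) (mul_nonneg hk.le (by linarith))
  have hc : k * τ / p * ((k - p + 1) / k * (p / (p + k * (ρ - 1)))) = 1 := by
    rw [hτ]
    field_simp
  calc (designMatrix lam v).det * ((k - p + 1) / k * (p / (p + k * (ρ - 1)))) ^ p
      ≤ _ * ((k - p + 1) / k * (p / (p + k * (ρ - 1)))) ^ p :=
        mul_le_mul_of_nonneg_right hdet (by positivity)
    _ = _ := by rw [mul_assoc, ← mul_pow, hc, one_pow, mul_one]
end

section
/- Let S be a real symmetric positive definite p×p matrix, let P be a nonempty finite set of vectors in ℝ^p, let ρ ≥ 1, and let v′ ∈ P satisfy (v′)ᵀ S⁻¹ v′ ≥ (1/ρ)·max_{v∈P} vᵀ S⁻¹ v. Then det(S + v′(v′)ᵀ) ≥ (1/ρ)·max_{v∈P} det(S + v vᵀ). -/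
open Matrix

/-! By the matrix determinant lemma, `det (S + v vᵀ) = det S * (1 + vᵀ S⁻¹ v)` with `det S > 0`.
Since `ρ ≥ 1`, a `ρ`-approximate maximizer of `q v = vᵀ S⁻¹ v` is also one of `1 + q v`. -/

theorem Matrix.det_add_vecMulVec {m R : Type*} [Fintype m] [DecidableEq m] [CommRing R]
    {A : Matrix m m R} (hA : IsUnit A.det) (u v : m → R) :
    (A + vecMulVec u v).det = A.det * (1 + v ⬝ᵥ A⁻¹ *ᵥ u) := by
  rw [vecMulVec_eq Unit, det_add_replicateCol_mul_replicateRow hA, det_unique (n := Unit),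
    add_apply, one_apply_eq, Matrix.mul_assoc, ← replicateCol_mulVec,
    replicateRow_mul_replicateCol_apply]

theorem one_div_mul_sup'_le_iff {ι α : Type*} [Field α] [LinearOrder α] [IsStrictOrderedRing α]
    {s : Finset ι} (hs : s.Nonempty) (f : ι → α) {ρ : α} (hρ : 0 < ρ) {a : α} :
    1 / ρ * s.sup' hs f ≤ a ↔ ∀ i ∈ s, f i ≤ ρ * a := by
  rw [one_div_mul_eq_div, div_le_iff₀' hρ, Finset.sup'_le_iff]

theorem approx_quadratic_gives_approx_det_general
    (p : ℕ) (S : Matrix (Fin p) (Fin p) ℝ) (hS : S.PosDef)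
    (P : Finset (Fin p → ℝ)) (hP : P.Nonempty) (ρ : ℝ) (hρ : 1 ≤ ρ)
    (v' : Fin p → ℝ)
    (happrox : v' ⬝ᵥ S⁻¹ *ᵥ v' ≥ (1 / ρ) * P.sup' hP (fun v => v ⬝ᵥ S⁻¹ *ᵥ v)) :
    (S + vecMulVec v' v').det ≥
      (1 / ρ) * P.sup' hP (fun v => (S + vecMulVec v v).det) := by
  have hρ₀ : 0 < ρ := zero_lt_one.trans_le hρ
  have hdet : 0 < S.det := hS.det_pos
  rw [ge_iff_le, one_div_mul_sup'_le_iff hP _ hρ₀] at happrox ⊢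
  intro v hv
  rw [det_add_vecMulVec hdet.ne'.isUnit, det_add_vecMulVec hdet.ne'.isUnit]
  calc S.det * (1 + v ⬝ᵥ S⁻¹ *ᵥ v)
      ≤ S.det * (ρ + ρ * (v' ⬝ᵥ S⁻¹ *ᵥ v')) := by gcongr; exact happrox v hv
    _ = ρ * (S.det * (1 + v' ⬝ᵥ S⁻¹ *ᵥ v')) := by ring

/-- Lemma 1 of the paper: an approximate maximizer of the quadratic form v ↦ vᵀS⁻¹v
is an approximate maximizer of the rank-one determinant update v ↦ det(S + vvᵀ). -/
theorem approx_quadratic_gives_approx_det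
    (p : ℕ) (S : Matrix (Fin p) (Fin p) ℝ) (hS : S.PosDef)
    (P : Finset (Fin p → ℝ)) (hP : P.Nonempty) (ρ : ℝ) (hρ : 1 ≤ ρ)
    (v' : Fin p → ℝ) (hv' : v' ∈ P)
    (happrox : v' ⬝ᵥ S⁻¹ *ᵥ v' ≥ (1 / ρ) * P.sup' hP (fun v => v ⬝ᵥ S⁻¹ *ᵥ v)) :
    (S + vecMulVec v' v').det ≥
      (1 / ρ) * P.sup' hP (fun v => (S + vecMulVec v v).det) :=
  approx_quadratic_gives_approx_det_general p S hS P hP ρ hρ v' happrox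
end

section
/- Let S be a real symmetric positive definite p×p matrix, let ρ > 0, and let u, w ∈ ℝ^p satisfy det(S − uuᵀ + wwᵀ) ≤ ρ·det(S). Writing τ_i = uᵀS⁻¹u, τ_j = wᵀS⁻¹w, and τ_{ij} = uᵀS⁻¹w, one has τ_j − τ_i·τ_j + τ_{ij}² ≤ τ_i + ρ − 1. -/
open Matrix BigOperators

/-- Lemma 2 of the paper: the swap inequality in terms of leverage scores. -/
theorem swap_leverage_inequality
    (p : ℕ) (S : Matrix (Fin p) (Fin p) ℝ) (hS : S.PosDef)
    (ρ : ℝ) (hρ : 0 < ρ) (u w : Fin p → ℝ)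
    (h : (S - vecMulVec u u + vecMulVec w w).det ≤ ρ * S.det) :
    w ⬝ᵥ S⁻¹ *ᵥ w - (u ⬝ᵥ S⁻¹ *ᵥ u) * (w ⬝ᵥ S⁻¹ *ᵥ w) + (u ⬝ᵥ S⁻¹ *ᵥ w) ^ 2
      ≤ u ⬝ᵥ S⁻¹ *ᵥ u + ρ - 1 := by
  have hdet : 0 < S.det := hS.det_pos
  have hUnit : IsUnit S.det := isUnit_iff_ne_zero.mpr (ne_of_gt hdet)
  set U : Matrix (Fin p) (Fin 2) ℝ := Matrix.of (fun i k => if k = 0 then u i else w i) with hU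
  set V : Matrix (Fin 2) (Fin p) ℝ := Matrix.of (fun k j => if k = 0 then -u j else w j) with hV
  have hUV : S - vecMulVec u u + vecMulVec w w = S + U * V := by
    ext i j
    simp [Matrix.add_apply, Matrix.sub_apply, Matrix.mul_apply, vecMulVec_apply,
      Fin.sum_univ_two, hU, hV]
    ring
  have hkey := Matrix.det_add_mul U V hUnit
  rw [hUV, hkey] at h
  have ht : S⁻¹ᵀ = S⁻¹ := by
    rw [Matrix.transpose_nonsing_inv]
    congr 1
    exact hS.isHermitian.eq
  have hswap : w ⬝ᵥ S⁻¹ *ᵥ u = u ⬝ᵥ S⁻¹ *ᵥ w := by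
    rw [Matrix.dotProduct_mulVec, ← Matrix.mulVec_transpose, ht, dotProduct_comm]
  have h00 : (V * S⁻¹ * U) 0 0 = -(u ⬝ᵥ S⁻¹ *ᵥ u) := by
    simp only [hU, hV, Matrix.mul_apply, Matrix.of_apply, if_pos rfl, dotProduct,
      Matrix.mulVec, dotProduct, Finset.sum_mul, neg_mul, Finset.mul_sum, neg_neg]
    rw [Finset.sum_comm]
    simp [← Finset.sum_neg_distrib, mul_comm, mul_left_comm]
  have h01 : (V * S⁻¹ * U) 0 1 = -(u ⬝ᵥ S⁻¹ *ᵥ w) := by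
    simp only [hU, hV, Matrix.mul_apply, Matrix.of_apply, dotProduct,
      Matrix.mulVec, dotProduct, Finset.sum_mul, neg_mul, Finset.mul_sum, neg_neg,
      if_pos rfl, one_ne_zero, if_false, Fin.one_eq_zero_iff]
    norm_num
    rw [Finset.sum_comm]
    simp [← Finset.sum_neg_distrib, mul_comm, mul_left_comm]
  have h10 : (V * S⁻¹ * U) 1 0 = w ⬝ᵥ S⁻¹ *ᵥ u := by
    simp only [hU, hV, Matrix.mul_apply, Matrix.of_apply, dotProduct,
      Matrix.mulVec, dotProduct, Finset.sum_mul, Finset.mul_sum,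
      if_pos rfl, Fin.one_eq_zero_iff]
    norm_num
    rw [Finset.sum_comm]
    simp [mul_comm, mul_left_comm]
  have h11 : (V * S⁻¹ * U) 1 1 = w ⬝ᵥ S⁻¹ *ᵥ w := by
    simp only [hU, hV, Matrix.mul_apply, Matrix.of_apply, dotProduct,
      Matrix.mulVec, dotProduct, Finset.sum_mul, Finset.mul_sum,
      Fin.one_eq_zero_iff]
    norm_num
    rw [Finset.sum_comm]
    simp [mul_comm, mul_left_comm]
  have h2 : (1 + V * S⁻¹ * U).det =
      (1 - u ⬝ᵥ S⁻¹ *ᵥ u) * (1 + w ⬝ᵥ S⁻¹ *ᵥ w) + (u ⬝ᵥ S⁻¹ *ᵥ w) * (w ⬝ᵥ S⁻¹ *ᵥ u) := by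
    rw [Matrix.det_fin_two]
    simp only [Matrix.add_apply, Matrix.one_apply_eq, Matrix.one_apply_ne (by norm_num : (0 : Fin 2) ≠ 1),
      Matrix.one_apply_ne (by norm_num : (1 : Fin 2) ≠ 0), h00, h01, h10, h11]
    ring
  rw [h2, hswap] at h
  have h3 : (1 - u ⬝ᵥ S⁻¹ *ᵥ u) * (1 + w ⬝ᵥ S⁻¹ *ᵥ w) + (u ⬝ᵥ S⁻¹ *ᵥ w) * (u ⬝ᵥ S⁻¹ *ᵥ w) ≤ ρ := by
    nlinarith [h, hdet]
  nlinarith [h3]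
end

section
/- Let p ≤ k be positive integers, let ρ ≥ 1, let v¹,…,vⁿ ∈ ℝ^p, and let m ∈ ℤⁿ with mᵢ ≥ 0 and Σᵢ mᵢ = k. Set S = Σᵢ mᵢ vⁱ(vⁱ)ᵀ and assume S is invertible. Suppose that for every index i with mᵢ > 0 and every j ∈ {1,…,n} one has det(S − vⁱ(vⁱ)ᵀ + vʲ(vʲ)ᵀ) ≤ ρ·det(S). Then for every j ∈ {1,…,n}, (vʲ)ᵀ S⁻¹ vʲ ≤ (p + k(ρ−1))/(k − p + 1). -/
/-!
Write `B = S⁻¹`, `τᵢ = vᵢᵀ B vᵢ` and `t = vⱼᵀ B vⱼ`. By the matrix determinant lemma for the rank-two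
update `S - vᵢvᵢᵀ + vⱼvⱼᵀ`, the exchange ratio is `(1 + t)(1 - τᵢ) + (vⱼᵀ B vᵢ)²`. Averaging it with
weights `mᵢ` and using `∑ mᵢ τᵢ = tr (B S) = p` and `∑ mᵢ (vⱼᵀ B vᵢ)² = vⱼᵀ B S B vⱼ = t` gives
`(1 + t)(k - p) + t ≤ ρ k`, which is the bound.
-/

open Matrix

namespace Matrix

variable {ι κ R : Type*} [Fintype ι] [Fintype κ] [CommRing R]

theorem det_sub_vecMulVec_add_vecMulVec_s5 [DecidableEq ι] {S : Matrix ι ι R} (hS : IsUnit S.det)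
    (u w : ι → R) :
    (S - vecMulVec u u + vecMulVec w w).det =
      S.det * ((1 + w ⬝ᵥ S⁻¹ *ᵥ w) * (1 - u ⬝ᵥ S⁻¹ *ᵥ u) +
        (w ⬝ᵥ S⁻¹ *ᵥ u) * (u ⬝ᵥ S⁻¹ *ᵥ w)) := by
  have hrank_two : S - vecMulVec u u + vecMulVec w w = S + (of ![w, u])ᵀ * of ![w, -u] := by
    ext a b
    simp only [add_apply, sub_apply, vecMulVec_apply, mul_apply, transpose_apply, of_apply,
      Pi.neg_apply, Fin.sum_univ_two, cons_val_zero, cons_val_one]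
    ring
  have hentry : ∀ (a b : Fin 2 → ι → R) (i j : Fin 2),
      (of a * S⁻¹ * (of b)ᵀ) i j = a i ⬝ᵥ S⁻¹ *ᵥ b j := fun a b i j => by
    rw [Matrix.mul_assoc, mul_apply']
    rfl
  rw [hrank_two, det_add_mul _ _ hS, det_fin_two]
  simp only [add_apply, hentry, one_apply_eq, one_apply_ne Fin.zero_ne_one,
    one_apply_ne Fin.zero_ne_one.symm, cons_val_zero, cons_val_one, neg_dotProduct]
  ring

theorem trace_mul_sum_smul_vecMulVec (B : Matrix ι ι R) (c : κ → R) (v : κ → ι → R) :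
    (B * ∑ i, c i • vecMulVec (v i) (v i)).trace = ∑ i, c i * (v i ⬝ᵥ B *ᵥ v i) := by
  simp only [Matrix.mul_sum, Matrix.mul_smul, trace_sum, trace_smul, mul_vecMulVec,
    trace_vecMulVec, smul_eq_mul, dotProduct_comm]

theorem dotProduct_sum_smul_vecMulVec_mulVec (c : κ → R) (v : κ → ι → R) (x y : ι → R) :
    x ⬝ᵥ (∑ i, c i • vecMulVec (v i) (v i)) *ᵥ y = ∑ i, c i * ((x ⬝ᵥ v i) * (v i ⬝ᵥ y)) := by
  simp only [sum_mulVec, dotProduct_sum, smul_mulVec, vecMulVec_mulVec, dotProduct_smul,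
    MulOpposite.smul_eq_mul_unop, MulOpposite.unop_op, smul_eq_mul]

theorem sum_mul_det_sub_vecMulVec_add_vecMulVec [DecidableEq ι] (c : κ → R) (v : κ → ι → R)
    (w : ι → R) {S : Matrix ι ι R} (hS : S = ∑ i, c i • vecMulVec (v i) (v i))
    (hdet : IsUnit S.det) :
    ∑ i, c i * (S - vecMulVec (v i) (v i) + vecMulVec w w).det =
      S.det * ((1 + w ⬝ᵥ S⁻¹ *ᵥ w) * (∑ i, c i - Fintype.card ι) + w ⬝ᵥ S⁻¹ *ᵥ w) := by
  have hleverage : ∑ i, c i * (v i ⬝ᵥ S⁻¹ *ᵥ v i) = Fintype.card ι := by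
    rw [← trace_mul_sum_smul_vecMulVec, ← hS, nonsing_inv_mul S hdet, trace_one]
  have hquadratic : ∑ i, c i * ((w ⬝ᵥ S⁻¹ *ᵥ v i) * (v i ⬝ᵥ S⁻¹ *ᵥ w)) = w ⬝ᵥ S⁻¹ *ᵥ w := by
    simp_rw [dotProduct_mulVec w S⁻¹]
    rw [← dotProduct_sum_smul_vecMulVec_mulVec, ← hS, mulVec_mulVec, mul_nonsing_inv S hdet,
      one_mulVec]
  set t := w ⬝ᵥ S⁻¹ *ᵥ w
  have hexpand : ∑ i, c i * (S.det * ((1 + t) * (1 - v i ⬝ᵥ S⁻¹ *ᵥ v i) +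
        (w ⬝ᵥ S⁻¹ *ᵥ v i) * (v i ⬝ᵥ S⁻¹ *ᵥ w))) =
      S.det * ((1 + t) * (∑ i, c i - ∑ i, c i * (v i ⬝ᵥ S⁻¹ *ᵥ v i)) +
        ∑ i, c i * ((w ⬝ᵥ S⁻¹ *ᵥ v i) * (v i ⬝ᵥ S⁻¹ *ᵥ w))) := by
    rw [← Finset.sum_sub_distrib, Finset.mul_sum, ← Finset.sum_add_distrib, Finset.mul_sum]
    exact Finset.sum_congr rfl fun i _ => by ring
  simp_rw [det_sub_vecMulVec_add_vecMulVec_s5 hdet]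
  rw [hexpand, hleverage, hquadratic]

end Matrix

theorem leverage_bound_at_local_opt_general
    (p k n : ℕ) (hpk : p ≤ k) (ρ : ℝ)
    (v : Fin n → Fin p → ℝ) (m : Fin n → ℤ) (hm : ∀ i, 0 ≤ m i)
    (hmk : ∑ i, m i = (k : ℤ))
    (S : Matrix (Fin p) (Fin p) ℝ)
    (hS : S = ∑ i, (m i : ℝ) • vecMulVec (v i) (v i))
    (hSinv : IsUnit S.det)
    (hlocal : ∀ i, 0 < m i → ∀ j,
      (S - vecMulVec (v i) (v i) + vecMulVec (v j) (v j)).det ≤ ρ * S.det) :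
    ∀ j, v j ⬝ᵥ S⁻¹ *ᵥ v j ≤ ((p : ℝ) + k * (ρ - 1)) / ((k : ℝ) - p + 1) := by
  intro j
  have hm' : ∀ i, (0 : ℝ) ≤ m i := fun i => by exact_mod_cast hm i
  have hdet_pos : 0 < S.det := by
    have hpsd : S.PosSemidef := hS ▸ posSemidef_sum _ fun i _ =>
      (posSemidef_vecMulVec_self_star (v i)).smul (hm' i)
    exact (hpsd.posDef_iff_isUnit.mpr ((isUnit_iff_isUnit_det S).mpr hSinv)).det_pos
  have haverage : ∑ i, (m i : ℝ) * (S - vecMulVec (v i) (v i) + vecMulVec (v j) (v j)).det ≤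
      ∑ i, (m i : ℝ) * (ρ * S.det) := by
    refine Finset.sum_le_sum fun i _ => ?_
    rcases (hm i).lt_or_eq with hpos | hzero
    · exact mul_le_mul_of_nonneg_left (hlocal i hpos j) (hm' i)
    · simp [← hzero]
  have hk : ∑ i, (m i : ℝ) = k := by exact_mod_cast hmk
  rw [sum_mul_det_sub_vecMulVec_add_vecMulVec _ _ _ hS hSinv, ← Finset.sum_mul, hk,
    Fintype.card_fin] at haverage
  have hbound : (1 + v j ⬝ᵥ S⁻¹ *ᵥ v j) * (k - p) + v j ⬝ᵥ S⁻¹ *ᵥ v j ≤ k * ρ :=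
    le_of_mul_le_mul_left (by linarith) hdet_pos
  have hkp : (p : ℝ) ≤ k := by exact_mod_cast hpk
  rw [le_div_iff₀ (by linarith)]
  linarith

/-- Lemma 3 of the paper: at a ρ-approximate local optimum, the leverage score of
every candidate vector is at most (p + k(ρ−1))/(k − p + 1). -/
theorem leverage_bound_at_local_opt
    (p k n : ℕ) (hp : 0 < p) (hpk : p ≤ k) (ρ : ℝ) (hρ : 1 ≤ ρ)
    (v : Fin n → Fin p → ℝ) (m : Fin n → ℤ) (hm : ∀ i, 0 ≤ m i)
    (hmk : ∑ i, m i = (k : ℤ))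
    (S : Matrix (Fin p) (Fin p) ℝ)
    (hS : S = ∑ i, (m i : ℝ) • vecMulVec (v i) (v i))
    (hSinv : IsUnit S.det)
    (hlocal : ∀ i, 0 < m i → ∀ j,
      (S - vecMulVec (v i) (v i) + vecMulVec (v j) (v j)).det ≤ ρ * S.det) :
    ∀ j, v j ⬝ᵥ S⁻¹ *ᵥ v j ≤ ((p : ℝ) + k * (ρ - 1)) / ((k : ℝ) - p + 1) :=
  leverage_bound_at_local_opt_general p k n hpk ρ v m hm hmk S hS hSinv hlocal
end

section
/- Let p ≥ 1 be an integer, let k be a real number, and let P = {v ∈ {0,1}^p : v₁ = 1} (so |P| = 2^{p−1}). Then det( Σ_{v∈P} (k/2^{p−1})·v vᵀ ) = k^p / 2^{2(p−1)}. -/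
open Matrix BigOperators

private lemma sum_indicator_prod (p : ℕ) (T : Finset (Fin p)) :
    ∑ s : Fin p → Bool, ∏ t ∈ T, (if s t then (1:ℝ) else 0) = 2 ^ (p - T.card) := by
  classical
  have h1 : ∀ s : Fin p → Bool, (∏ t ∈ T, (if s t then (1:ℝ) else 0))
      = ∏ t : Fin p, (if t ∈ T then (if s t then (1:ℝ) else 0) else 1) := by
    intro s
    rw [Finset.prod_ite_mem, Finset.univ_inter]
  simp_rw [h1]
  rw [← Fintype.prod_sum (fun t (b : Bool) => if t ∈ T then (if b then (1:ℝ) else 0) else 1)]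
  have h2 : ∀ t : Fin p, (∑ b : Bool, if t ∈ T then (if b then (1:ℝ) else 0) else 1)
      = if t ∈ T then 1 else 2 := by
    intro t
    by_cases ht : t ∈ T <;> simp [ht]
  simp_rw [h2]
  rw [Finset.prod_ite]
  simp only [Finset.prod_const_one, one_mul, Finset.prod_const]
  congr 1
  have h3 : Finset.univ.filter (fun x : Fin p => ¬ x ∈ T) = Tᶜ := by
    ext x; simp
  rw [h3, Finset.card_compl, Fintype.card_fin]

private lemma pow_sub_div (c p : ℕ) (hc : 1 ≤ c) (hcp : c ≤ p) :
    (2:ℝ)^(p - c) / 2^(p-1) = 1 / 2^(c-1) := by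
  have h : p - 1 = (p - c) + (c - 1) := by omega
  have h2 : (2:ℝ)^(p-c) ≠ 0 := by positivity
  rw [h, pow_add, ← div_div, div_self h2]

private noncomputable def Amat (p : ℕ) (i0 : Fin p) : Matrix (Fin p) (Fin p) ℝ :=
  fun i j => 2 ^ (p - ({i0, i, j} : Finset (Fin p)).card) / 2 ^ (p - 1)

private lemma Amat_val (p : ℕ) (i0 i j : Fin p) (c : ℕ)
    (hc : ({i0, i, j} : Finset (Fin p)).card = c) :
    Amat p i0 i j = 1 / 2 ^ (c - 1) := by
  have hcp : c ≤ p := by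
    rw [← hc]
    simpa using Finset.card_le_univ ({i0, i, j} : Finset (Fin p))
  have hc1 : 1 ≤ c := by
    rw [← hc]
    exact Finset.card_pos.mpr ⟨i0, by simp⟩
  unfold Amat
  rw [hc, pow_sub_div c p hc1 hcp]

private noncomputable def Bmat (p : ℕ) (i0 : Fin p) : Matrix (Fin p) (Fin p) ℝ :=
  fun i j => if i = i0 then Amat p i0 i0 j else if i = j then 1/4 else 0

private lemma detA (p : ℕ) (hp : 1 ≤ p) :
    (Amat p ⟨0, hp⟩).det = (1/4 : ℝ)^(p-1) := by
  classical
  set i0 : Fin p := ⟨0, hp⟩ with hi0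
  -- card computations
  have card1 : ({i0, i0, i0} : Finset (Fin p)).card = 1 := by simp
  have card2a : ∀ j : Fin p, j ≠ i0 → ({i0, i0, j} : Finset (Fin p)).card = 2 := by
    intro j hj
    rw [Finset.insert_idem, Finset.card_insert_of_notMem (by simpa using hj.symm),
      Finset.card_singleton]
  have card2b : ∀ i : Fin p, i ≠ i0 → ({i0, i, i0} : Finset (Fin p)).card = 2 := by
    intro i hi
    have : ({i0, i, i0} : Finset (Fin p)) = {i0, i} := by
      ext x; simp; tauto
    rw [this, Finset.card_insert_of_notMem (by simpa using hi.symm), Finset.card_singleton]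
  have card2c : ∀ i : Fin p, i ≠ i0 → ({i0, i, i} : Finset (Fin p)).card = 2 := by
    intro i hi
    rw [show ({i0, i, i} : Finset (Fin p)) = {i0, i} by simp,
      Finset.card_insert_of_notMem (by simpa using hi.symm), Finset.card_singleton]
  have card3 : ∀ i j : Fin p, i ≠ i0 → j ≠ i0 → i ≠ j →
      ({i0, i, j} : Finset (Fin p)).card = 3 := by
    intro i j hi hj hij
    rw [Finset.card_insert_of_notMem (by simp [Ne.symm hi, Ne.symm hj]),
      Finset.card_insert_of_notMem (by simpa using hij), Finset.card_singleton]
  -- row operation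
  have hrow : (Amat p i0).det = (Bmat p i0).det := by
    apply Matrix.det_eq_of_forall_row_eq_smul_add_const
      (fun i => if i = i0 then 0 else 1/2) i0 (by simp)
    intro i j
    by_cases hi : i = i0
    · subst hi; simp [Bmat]
    · simp only [Bmat, if_neg hi, hi, if_false]
      by_cases hj : j = i0
      · subst hj
        rw [Amat_val p i0 i i0 2 (card2b i hi), Amat_val p i0 i0 i0 1 card1,
          if_neg (by exact fun h => hi h)]
        norm_num
      · by_cases hij : i = j
        · subst hij
          rw [Amat_val p i0 i i 2 (card2c i hi), Amat_val p i0 i0 i 2 (card2a i hi),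
            if_pos rfl]
          norm_num
        · rw [Amat_val p i0 i j 3 (card3 i j hi hj hij), Amat_val p i0 i0 j 2 (card2a j hj),
            if_neg hij]
          norm_num
  rw [hrow]
  have htri : (Bmat p i0).BlockTriangular id := by
    intro i j hlt
    have hi : i ≠ i0 := by
      intro h; subst h
      exact absurd hlt (by simp [hi0, Fin.lt_def])
    have hij : i ≠ j := fun h => by subst h; exact lt_irrefl _ hlt
    simp [Bmat, hi, hij]
  rw [Matrix.det_of_upperTriangular htri]
  have hdiag : ∀ i : Fin p, Bmat p i0 i i = if i = i0 then 1 else 1/4 := by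
    intro i
    by_cases hi : i = i0
    · subst hi; simp [Bmat, Amat_val p i0 i0 i0 1 card1]
    · simp [Bmat, hi]
  simp_rw [hdiag]
  rw [← Finset.mul_prod_erase Finset.univ _ (Finset.mem_univ i0), if_pos rfl, one_mul]
  rw [Finset.prod_congr rfl (fun x hx => if_neg (Finset.ne_of_mem_erase hx))]
  rw [Finset.prod_const, Finset.card_erase_of_mem (Finset.mem_univ i0), Finset.card_univ,
    Fintype.card_fin]

/-- The uniform weighting k/2^(p−1) on P = {v ∈ {0,1}^p : v₁ = 1} has information
matrix of determinant k^p / 2^(2(p−1)). -/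
theorem uniform_weighting_det
    (p : ℕ) (hp : 1 ≤ p) (k : ℝ) :
    (∑ s ∈ Finset.univ.filter (fun s : Fin p → Bool => s ⟨0, hp⟩ = true),
        (k / 2 ^ (p - 1)) •
          vecMulVec (fun i => if s i then (1 : ℝ) else 0)
            (fun i => if s i then (1 : ℝ) else 0)).det
      = k ^ p / 2 ^ (2 * (p - 1)) := by
  classical
  set i0 : Fin p := ⟨0, hp⟩ with hi0
  have hmat : (∑ s ∈ Finset.univ.filter (fun s : Fin p → Bool => s i0 = true),
        (k / 2 ^ (p - 1)) •
          vecMulVec (fun i => if s i then (1 : ℝ) else 0)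
            (fun i => if s i then (1 : ℝ) else 0)) = k • Amat p i0 := by
    ext i j
    rw [Matrix.sum_apply]
    simp only [Matrix.smul_apply, vecMulVec_apply, smul_eq_mul]
    rw [← Finset.mul_sum]
    have key : ∑ s ∈ Finset.univ.filter (fun s : Fin p → Bool => s i0 = true),
        ((if s i then (1:ℝ) else 0) * (if s j then (1:ℝ) else 0))
        = 2 ^ (p - ({i0, i, j} : Finset (Fin p)).card) := by
      rw [← sum_indicator_prod p {i0, i, j}, Finset.sum_filter]
      apply Finset.sum_congr rfl
      intro s _
      rw [eq_comm]
      by_cases h0 : s i0 = true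
      case neg =>
        rw [if_neg h0]
        exact Finset.prod_eq_zero (Finset.mem_insert_self i0 {i, j}) (by simp [h0])
      rw [if_pos h0]
      by_cases h1 : s i = true
      case neg =>
        rw [if_neg h1, zero_mul]
        exact Finset.prod_eq_zero
          (by simp : i ∈ ({i0, i, j} : Finset (Fin p))) (by simp [h1])
      by_cases h2 : s j = true
      case neg =>
        rw [if_neg h2, mul_zero]
        exact Finset.prod_eq_zero
          (by simp : j ∈ ({i0, i, j} : Finset (Fin p))) (by simp [h2])
      rw [if_pos h1, if_pos h2, mul_one]
      apply Finset.prod_eq_one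
      intro t ht
      simp only [Finset.mem_insert, Finset.mem_singleton] at ht
      rcases ht with h|h|h <;> subst h <;> simp [h0, h1, h2]
    rw [key]
    simp only [Matrix.smul_apply, smul_eq_mul, Amat]
    ring
  rw [hmat, Matrix.det_smul, detA p hp]
  rw [Fintype.card_fin]
  rw [div_pow, one_pow, show (4:ℝ) = 2^2 by norm_num, ← pow_mul]
  ring
end

section
/- Let p, k ≥ 1 be integers and let V′ be a real p×k matrix all of whose entries lie in {−1, 1}. Then there exists a real p×k matrix V all of whose entries lie in {0, 1}, whose first row is the all-ones row, such that det(V Vᵀ) = det(V′ (V′)ᵀ) / 2^{2(p−1)}. -/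
/-!
Multiplying each column of `V'` by its entry in the first row `z` makes that row all ones and
leaves `V' * V'ᵀ` unchanged. Replacing every row by its average with row `z` then yields a
`0/1` matrix whose first row is still all ones; this is left multiplication by
`½ (1 + 𝟙 e_zᵀ)`, whose determinant is `2 / 2 ^ p` by the matrix determinant lemma, so the
Gram determinant is divided by `(2 ^ (p - 1)) ^ 2`.
-/

open Matrix

namespace Matrix

variable {m n K : Type*}

theorem mul_diagonal_mul_transpose_self_of_mul_self_eq_one [CommRing K] [Fintype n]
    [DecidableEq n] (M : Matrix m n K) {s : n → K} (hs : ∀ j, s j * s j = 1) :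
    M * diagonal s * (M * diagonal s)ᵀ = M * Mᵀ := by
  rw [transpose_mul, diagonal_transpose, Matrix.mul_assoc, ← Matrix.mul_assoc (diagonal s),
    diagonal_mul_diagonal, funext hs, diagonal_one, Matrix.one_mul]

theorem det_mul_mul_transpose_mul [CommRing K] [Fintype m] [DecidableEq m] [Fintype n]
    (A : Matrix m m K) (M : Matrix m n K) :
    det (A * M * (A * M)ᵀ) = det A ^ 2 * det (M * Mᵀ) := by
  rw [transpose_mul, Matrix.mul_assoc, ← Matrix.mul_assoc M, ← Matrix.mul_assoc A, det_mul,
    det_mul, det_transpose]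
  ring

theorem det_one_add_vecMulVec_one_single [CommRing K] [Fintype m] [DecidableEq m] (z : m) :
    det (1 + vecMulVec 1 (Pi.single z 1) : Matrix m m K) = 2 := by
  rw [vecMulVec_eq Unit, det_one_add_replicateCol_mul_replicateRow, single_dotProduct, one_mul,
    Pi.one_apply, one_add_one_eq_two]

def averageWithRow [DivisionRing K] (M : Matrix m n K) (z : m) : Matrix m n K :=
  of fun i j => (M i j + M z j) / 2

theorem averageWithRow_eq_mul [Field K] [Fintype m] [DecidableEq m] (M : Matrix m n K) (z : m) :
    M.averageWithRow z = ((2⁻¹ : K) • (1 + vecMulVec (1 : m → K) (Pi.single z 1))) * M := by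
  rw [Matrix.smul_mul, Matrix.add_mul, Matrix.one_mul, vecMulVec_mul, single_one_vecMul]
  ext i j
  simp only [averageWithRow, of_apply, smul_apply, add_apply, vecMulVec_apply, Pi.one_apply,
    row_apply, one_mul, smul_eq_mul]
  ring

theorem det_averageWithRow_mul_transpose [Field K] [NeZero (2 : K)] [Fintype m] [DecidableEq m]
    [Fintype n] (M : Matrix m n K) (z : m) :
    det (M.averageWithRow z * (M.averageWithRow z)ᵀ) =
      det (M * Mᵀ) / 2 ^ (2 * (Fintype.card m - 1)) := by
  have : Nonempty m := ⟨z⟩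
  obtain ⟨c, hc⟩ := Nat.exists_eq_add_one_of_ne_zero (Fintype.card_ne_zero (α := m))
  have hdet : (2⁻¹ : K) ^ (c + 1) * 2 = (2 ^ c)⁻¹ := by
    rw [pow_succ, mul_assoc, inv_mul_cancel₀ two_ne_zero, mul_one, inv_pow]
  rw [averageWithRow_eq_mul, det_mul_mul_transpose_mul, det_smul,
    det_one_add_vecMulVec_one_single, hc, hdet, Nat.add_sub_cancel, pow_mul', div_eq_inv_mul,
    inv_pow]

end Matrix

theorem pm_one_to_zero_one_transform_general
    (p k : ℕ) (hp : 1 ≤ p)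
    (V' : Matrix (Fin p) (Fin k) ℝ) (hV' : ∀ i j, V' i j = -1 ∨ V' i j = 1) :
    ∃ V : Matrix (Fin p) (Fin k) ℝ,
      (∀ i j, V i j = 0 ∨ V i j = 1) ∧
      (∀ j, V ⟨0, hp⟩ j = 1) ∧
      (V * Vᵀ).det = (V' * V'ᵀ).det / 2 ^ (2 * (p - 1)) := by
  set z : Fin p := ⟨0, hp⟩
  have hsq (j : Fin k) : V' z j * V' z j = 1 := by rcases hV' z j with h | h <;> norm_num [h]
  set W := V' * diagonal (V' z)
  have hW (i j) : W i j = V' i j * V' z j := mul_diagonal _ _ _ _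
  refine ⟨W.averageWithRow z, fun i j => ?_, fun j => ?_, ?_⟩
  · simp only [averageWithRow, of_apply, hW, hsq]
    rcases hV' i j with h | h <;> rcases hV' z j with h' | h' <;> norm_num [h, h']
  · norm_num [averageWithRow, hW, hsq]
  · rw [det_averageWithRow_mul_transpose, mul_diagonal_mul_transpose_self_of_mul_self_eq_one _ hsq,
      Fintype.card_fin]

/-- The {−1,1} → {0,1} transformation: any ±1 matrix V′ can be transformed into a
0/1 matrix V with all-ones first row whose Gram determinant is smaller by exactly
the factor 2^(2(p−1)). -/
theorem pm_one_to_zero_one_transform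
    (p k : ℕ) (hp : 1 ≤ p) (hk : 1 ≤ k)
    (V' : Matrix (Fin p) (Fin k) ℝ) (hV' : ∀ i j, V' i j = -1 ∨ V' i j = 1) :
    ∃ V : Matrix (Fin p) (Fin k) ℝ,
      (∀ i j, V i j = 0 ∨ V i j = 1) ∧
      (∀ j, V ⟨0, hp⟩ j = 1) ∧
      (V * Vᵀ).det = (V' * V'ᵀ).det / 2 ^ (2 * (p - 1)) :=
  pm_one_to_zero_one_transform_general p k hp V' hV'
end

section
/- Let p ≥ 1 be an integer, let P′ be a nonempty finite set of vectors in ℝ^p, let k > 0 be a real number, and let λ* : P′ → ℝ satisfy λ*(v) ≥ 0 for all v ∈ P′ and Σ_{v∈P′} λ*(v) = k. Then there exists λ : P′ → ℝ with λ(v) ≥ 0 for all v, Σ_{v∈P′} λ(v) = k, Σ_{v∈P′} λ(v)·v vᵀ = Σ_{v∈P′} λ*(v)·v vᵀ, and the number of v ∈ P′ with λ(v) > 0 is at most p(p−1)/2 + p + 1. -/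
/-!
Dividing by `k`, the information matrix `∑ λ*(v) v vᵀ / k` is a convex combination of the matrices
`v vᵀ`, which lie in the `p(p+1)/2`-dimensional space of symmetric matrices. Carathéodory's theorem
rewrites it as a convex combination of at most `p(p+1)/2 + 1` of them, and multiplying those
weights by `k` gives the sparse design.
-/

open Matrix Finset Function Module

theorem Finset.sum_extend_zero_smul {ι α R M : Type*} [Fintype ι] [Semiring R] [AddCommMonoid M]
    [Module R M] {s : Finset α} {e : ι → α} (he : Injective e) (hes : ∀ i, e i ∈ s)
    (g : ι → R) (F : α → M) :
    ∑ a ∈ s, extend e g 0 a • F a = ∑ i, g i • F (e i) := by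
  refine (sum_of_injOn e he.injOn (fun i _ ↦ hes i) ?_ fun i _ ↦ by rw [he.extend_apply]).symm
  rintro a - ha
  rw [extend_apply' _ _ _ fun ⟨i, hi⟩ ↦ ha ⟨i, mem_univ i, hi⟩, Pi.zero_apply, zero_smul]

theorem Finset.exists_nonneg_reweighting_card_support_le_of_pos {α E : Type*} [AddCommGroup E]
    [Module ℝ E] [FiniteDimensional ℝ E] (s : Finset α) (f : α → E) (w : α → ℝ)
    (hw : ∀ a ∈ s, 0 ≤ w a) (hW : 0 < ∑ a ∈ s, w a) :
    ∃ w' : α → ℝ, (∀ a ∈ s, 0 ≤ w' a) ∧ ∑ a ∈ s, w' a = ∑ a ∈ s, w a ∧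
      ∑ a ∈ s, w' a • f a = ∑ a ∈ s, w a • f a ∧
      #{a ∈ s | 0 < w' a} ≤ finrank ℝ E + 1 := by
  classical
  obtain ⟨ι, _, z, c, hzf, haff, hc, hc1, hcz⟩ := eq_pos_convex_span_of_mem_convexHull <|
    s.centerMass_mem_convexHull hw hW fun a ha ↦ Set.mem_image_of_mem f ha
  choose e hes hez using fun i ↦ hzf (Set.mem_range_self i)
  have he : Injective e := fun i j hij ↦ haff.injective (by rw [← hez, ← hez, hij])
  set W := ∑ a ∈ s, w a
  refine ⟨extend e (fun i ↦ W * c i) 0,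
    fun a _ ↦ extend_nonneg (fun i ↦ mul_nonneg hW.le (hc i).le) le_rfl a, ?_, ?_, ?_⟩
  · have := sum_extend_zero_smul he hes (fun i ↦ W * c i) (1 : α → ℝ)
    simp only [Pi.one_apply, smul_eq_mul, mul_one] at this
    rw [this, ← mul_sum, hc1, mul_one]
  · rw [sum_extend_zero_smul he hes]
    simp_rw [hez, mul_smul, ← smul_sum, hcz]
    exact smul_inv_smul₀ hW.ne' _
  · calc #{a ∈ s | 0 < extend e (fun i ↦ W * c i) 0 a}
        ≤ #(univ.image e) := card_le_card fun a ha ↦ by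
          obtain ⟨i, -, rfl⟩ := support_extend_zero_subset (mem_filter.1 ha).2.ne'
          exact mem_image_of_mem e (mem_univ i)
      _ ≤ Fintype.card ι := card_image_le
      _ ≤ finrank ℝ (vectorSpan ℝ (Set.range z)) + 1 := haff.card_le_finrank_succ
      _ ≤ finrank ℝ E + 1 := Nat.add_le_add_right (Submodule.finrank_le _) 1

theorem Finset.exists_nonneg_reweighting_card_support_le {α E : Type*} [AddCommGroup E]
    [Module ℝ E] [FiniteDimensional ℝ E] (s : Finset α) (f : α → E) (w : α → ℝ)
    (hw : ∀ a ∈ s, 0 ≤ w a) :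
    ∃ w' : α → ℝ, (∀ a ∈ s, 0 ≤ w' a) ∧ ∑ a ∈ s, w' a = ∑ a ∈ s, w a ∧
      ∑ a ∈ s, w' a • f a = ∑ a ∈ s, w a • f a ∧
      #{a ∈ s | 0 < w' a} ≤ finrank ℝ E + 1 := by
  rcases (sum_nonneg hw).eq_or_lt with hW | hW
  · have hw0 : ∀ a ∈ s, w a = 0 := (sum_eq_zero_iff_of_nonneg hw).1 hW.symm
    refine ⟨w, hw, rfl, rfl, ?_⟩
    rw [filter_false_of_mem fun a ha ↦ (hw0 a ha).not_gt, card_empty]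
    exact Nat.zero_le _
  · exact s.exists_nonneg_reweighting_card_support_le_of_pos f w hw hW

/-- The symmetric matrix `vecMulVec v v`, as a vector in a space of dimension `#(Sym2 n)`. -/
def Matrix.symOuter {n R : Type*} [CommMagma R] (v : n → R) : Sym2 n → R :=
  Sym2.lift ⟨fun i j ↦ v i * v j, fun _ _ ↦ mul_comm _ _⟩

@[simp]
theorem Matrix.symOuter_mk {n R : Type*} [CommMagma R] (v : n → R) (i j : n) :
    symOuter v s(i, j) = v i * v j :=
  rfl

theorem Matrix.sum_smul_vecMulVec_self_eq_of_sum_smul_symOuter_eq {ι n R : Type*} [CommRing R]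
    {s : Finset ι} {v : ι → n → R} {w w' : ι → R}
    (h : ∑ a ∈ s, w a • symOuter (v a) = ∑ a ∈ s, w' a • symOuter (v a)) :
    ∑ a ∈ s, w a • vecMulVec (v a) (v a) = ∑ a ∈ s, w' a • vecMulVec (v a) (v a) := by
  ext i j
  simpa [Matrix.sum_apply, vecMulVec_apply] using congrFun h s(i, j)

theorem finrank_sym2_fin_fun (p : ℕ) :
    finrank ℝ (Sym2 (Fin p) → ℝ) = p * (p - 1) / 2 + p := by
  rw [finrank_fintype_fun_eq_card, Sym2.card, Fintype.card_fin, Nat.choose_two_right,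
    Nat.triangle_succ]

theorem design_sparsification_general
    (p : ℕ) (P' : Finset (Fin p → ℝ))
    (k : ℝ) (lamStar : (Fin p → ℝ) → ℝ)
    (hnn : ∀ v ∈ P', 0 ≤ lamStar v) (hsum : ∑ v ∈ P', lamStar v = k) :
    ∃ lam : (Fin p → ℝ) → ℝ,
      (∀ v ∈ P', 0 ≤ lam v) ∧
      (∑ v ∈ P', lam v = k) ∧
      (∑ v ∈ P', lam v • vecMulVec v v) = (∑ v ∈ P', lamStar v • vecMulVec v v) ∧
      (P'.filter fun v => 0 < lam v).card ≤ p * (p - 1) / 2 + p + 1 := by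
  obtain ⟨lam, hlam, hlam_sum, hlam_moment, hlam_card⟩ :=
    P'.exists_nonneg_reweighting_card_support_le symOuter lamStar hnn
  refine ⟨lam, hlam, hlam_sum.trans hsum,
    sum_smul_vecMulVec_self_eq_of_sum_smul_symOuter_eq (v := id) hlam_moment, ?_⟩
  rwa [finrank_sym2_fin_fun] at hlam_card

/-- Sparsification: any fractional design can be replaced by one with the same
information matrix and total weight supported on at most C(p,2) + p + 1 vectors. -/
theorem design_sparsification
    (p : ℕ) (hp : 1 ≤ p) (P' : Finset (Fin p → ℝ)) (hP' : P'.Nonempty)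
    (k : ℝ) (hk : 0 < k) (lamStar : (Fin p → ℝ) → ℝ)
    (hnn : ∀ v ∈ P', 0 ≤ lamStar v) (hsum : ∑ v ∈ P', lamStar v = k) :
    ∃ lam : (Fin p → ℝ) → ℝ,
      (∀ v ∈ P', 0 ≤ lam v) ∧
      (∑ v ∈ P', lam v = k) ∧
      (∑ v ∈ P', lam v • vecMulVec v v) = (∑ v ∈ P', lamStar v • vecMulVec v v) ∧
      (P'.filter fun v => 0 < lam v).card ≤ p * (p - 1) / 2 + p + 1 :=
  design_sparsification_general p P' k lamStar hnn hsum
end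

section
/- Let p ≥ 1 be an integer, let P′ be a nonempty finite set of vectors in ℝ^p, let Λ be a real symmetric positive definite p×p matrix, let k > 0, and let ν = max_{v∈P′} vᵀ Λ v. Then for every λ : P′ → ℝ with λ(v) ≥ 0 for all v and Σ_{v∈P′} λ(v) = k, one has det( Σ_{v∈P′} λ(v)·v vᵀ ) · det(Λ) ≤ exp(k·ν − p). -/
/-!
Write `Λ = Cᴴ C`. For the design matrix `M = ∑ λ(v) v vᵀ`, the matrix `C M Cᴴ` is positive
semidefinite with determinant `det M · det Λ` and trace `tr (M Λ) = ∑ λ(v) vᵀ Λ v ≤ k ν`.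
Applying `t ≤ exp (t - 1)` to each of its eigenvalues gives `det ≤ exp (tr - p)`.
-/

open Matrix BigOperators

namespace Matrix

variable {n : Type*} [Fintype n]

theorem PosSemidef.det_le_exp_trace_sub_card [DecidableEq n] {A : Matrix n n ℝ}
    (hA : A.PosSemidef) :
    A.det ≤ Real.exp (A.trace - Fintype.card n) := by
  have hH := hA.isHermitian
  rw [hH.det_eq_prod_eigenvalues, hH.trace_eq_sum_eigenvalues]
  calc ∏ i, hH.eigenvalues i
      ≤ ∏ i, Real.exp (hH.eigenvalues i - 1) :=
        Finset.prod_le_prod (fun i _ => hA.eigenvalues_nonneg i) fun i _ => by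
          linarith [Real.add_one_le_exp (hH.eigenvalues i - 1)]
    _ = Real.exp (∑ i, hH.eigenvalues i - Fintype.card n) := by
        rw [← Real.exp_sum, Finset.sum_sub_distrib]
        simp

theorem PosSemidef.det_mul_det_le_exp_trace_mul_sub_card [DecidableEq n] {A B : Matrix n n ℝ}
    (hA : A.PosSemidef) (hB : B.PosSemidef) :
    A.det * B.det ≤ Real.exp ((A * B).trace - Fintype.card n) := by
  obtain ⟨C, rfl⟩ : ∃ C : Matrix n n ℝ, B = Cᴴ * C := by
    open scoped MatrixOrder in exact CStarAlgebra.nonneg_iff_eq_star_mul_self.mp hB.nonneg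
  have hdet : (C * A * Cᴴ).det = A.det * (Cᴴ * C).det := by
    simp only [det_mul]
    ring
  have htrace : (C * A * Cᴴ).trace = (A * (Cᴴ * C)).trace := by
    rw [trace_mul_comm, ← Matrix.mul_assoc, trace_mul_comm]
  rw [← hdet, ← htrace]
  exact (hA.mul_mul_conjTranspose_same C).det_le_exp_trace_sub_card

theorem posSemidef_sum_smul_vecMulVec_self {ι : Type*} (s : Finset ι) {w : ι → ℝ}
    (hw : ∀ i ∈ s, 0 ≤ w i) (x : ι → n → ℝ) :
    (∑ i ∈ s, w i • vecMulVec (x i) (x i)).PosSemidef :=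
  posSemidef_sum s fun i hi => by
    simpa using (posSemidef_vecMulVec_self_star (x i)).smul (hw i hi)

theorem trace_vecMulVec_self_mul {R : Type*} [CommRing R] (v : n → R) (B : Matrix n n R) :
    (vecMulVec v v * B).trace = v ⬝ᵥ B *ᵥ v := by
  rw [vecMulVec_mul, trace_vecMulVec, dotProduct_comm, ← dotProduct_mulVec]

theorem trace_sum_smul_vecMulVec_self_mul {R : Type*} [CommRing R] {ι : Type*} (s : Finset ι)
    (w : ι → R) (x : ι → n → R) (B : Matrix n n R) :
    ((∑ i ∈ s, w i • vecMulVec (x i) (x i)) * B).trace = ∑ i ∈ s, w i * (x i ⬝ᵥ B *ᵥ x i) := by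
  simp only [Finset.sum_mul, trace_sum, smul_mul, trace_smul, trace_vecMulVec_self_mul,
    smul_eq_mul]

end Matrix

theorem design_weak_duality_general
    (p : ℕ) (P' : Finset (Fin p → ℝ)) (hP' : P'.Nonempty)
    (Λ : Matrix (Fin p) (Fin p) ℝ) (hΛ : Λ.PosDef) (k : ℝ)
    (ν : ℝ) (hν : ν = P'.sup' hP' fun v => v ⬝ᵥ Λ *ᵥ v) :
    ∀ lam : (Fin p → ℝ) → ℝ, (∀ v ∈ P', 0 ≤ lam v) → (∑ v ∈ P', lam v = k) →
      (∑ v ∈ P', lam v • vecMulVec v v).det * Λ.det ≤ Real.exp (k * ν - p) := by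
  intro lam hlam hsum
  have hM := posSemidef_sum_smul_vecMulVec_self P' hlam fun v => v
  have htrace : ((∑ v ∈ P', lam v • vecMulVec v v) * Λ).trace ≤ k * ν := by
    rw [trace_sum_smul_vecMulVec_self_mul P' lam (fun v => v), ← hsum, Finset.sum_mul]
    refine Finset.sum_le_sum fun v hv => mul_le_mul_of_nonneg_left ?_ (hlam v hv)
    exact hν ▸ Finset.le_sup' (fun v => v ⬝ᵥ Λ *ᵥ v) hv
  calc _ ≤ Real.exp (((∑ v ∈ P', lam v • vecMulVec v v) * Λ).trace - p) := by
        simpa using hM.det_mul_det_le_exp_trace_mul_sub_card hΛ.posSemidef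
    _ ≤ Real.exp (k * ν - p) := Real.exp_le_exp.2 (by linarith)

/-- Weak duality between the continuous relaxation of D-optimal design and its
Lagrangian dual. -/
theorem design_weak_duality
    (p : ℕ) (hp : 1 ≤ p) (P' : Finset (Fin p → ℝ)) (hP' : P'.Nonempty)
    (Λ : Matrix (Fin p) (Fin p) ℝ) (hΛ : Λ.PosDef) (k : ℝ) (hk : 0 < k)
    (ν : ℝ) (hν : ν = P'.sup' hP' fun v => v ⬝ᵥ Λ *ᵥ v) :
    ∀ lam : (Fin p → ℝ) → ℝ, (∀ v ∈ P', 0 ≤ lam v) → (∑ v ∈ P', lam v = k) →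
      (∑ v ∈ P', lam v • vecMulVec v v).det * Λ.det ≤ Real.exp (k * ν - p) :=
  design_weak_duality_general p P' hP' Λ hΛ k ν hν
end

section
/- Let p ≥ 1 be an integer, let P′ be a nonempty finite set of vectors in ℝ^p, let k > 0, and let λ* : P′ → ℝ with λ*(v) ≥ 0 and Σ_{v∈P′} λ*(v) = k be such that S* = Σ_{v∈P′} λ*(v)·v vᵀ is invertible and det(Σ_{v∈P′} λ(v)·v vᵀ) ≤ det(S*) for every λ : P′ → ℝ with λ(v) ≥ 0 and Σ_{v∈P′} λ(v) = k. Then max_{v∈P′} vᵀ (S*)⁻¹ v = p/k. -/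
/-!
Since `S⁻¹ S = 1`, the weighted leverages satisfy `∑ λ*(v) vᵀ S⁻¹ v = tr (S⁻¹ S) = p`, and the
weights sum to `k`, so the largest leverage is at least `p / k`. Conversely, if `vᵀ S⁻¹ v > p / k`
for some `v`, moving a fraction `t` of the total mass onto `v` replaces `S` by
`(1 - t) S + t k v vᵀ`, whose determinant is `(1 - t)^p (1 + t / (1 - t) · k vᵀ S⁻¹ v) · det S` by
the matrix determinant lemma; for small `t > 0` the factor exceeds `1`, contradicting optimality.
-/

open Matrix

namespace Matrix

variable {m : Type*} [Fintype m] [DecidableEq m] {R : Type*} [CommRing R]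

theorem det_add_vecMulVec_s12 {A : Matrix m m R} (hA : IsUnit A.det) (u v : m → R) :
    (A + vecMulVec u v).det = A.det * (1 + v ⬝ᵥ A⁻¹ *ᵥ u) := by
  rw [vecMulVec_eq Unit, det_add_replicateCol_mul_replicateRow hA, ← replicateRow_vecMul,
    det_unique (1 + _), add_apply, one_apply_eq, replicateRow_mul_replicateCol_apply,
    dotProduct_mulVec]

end Matrix

theorem exists_one_lt_one_sub_pow_mul (p : ℕ) {a : ℝ} (ha : p < a) :
    ∃ t : ℝ, 0 < t ∧ t < 1 ∧ 1 < (1 - t) ^ p * (1 + t / (1 - t) * a) := by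
  have hp : (0 : ℝ) ≤ p := p.cast_nonneg
  set t := min (1 / 2) ((a - p) / (p * a + 1))
  have ht0 : 0 < t := lt_min (by norm_num) (div_pos (by linarith) (by nlinarith))
  have ht1 : t ≤ 1 / 2 := min_le_left _ _
  have hta : t * (p * a + 1) ≤ a - p := (le_div_iff₀ (by nlinarith)).1 (min_le_right _ _)
  have hbernoulli : 1 - p * t ≤ (1 - t) ^ p := by
    simpa [sub_eq_add_neg] using one_add_mul_le_pow (a := -t) (by linarith) p
  refine ⟨t, ht0, by linarith, ?_⟩
  have h1t : 0 < 1 - t := by linarith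
  have hsplit : 1 + t / (1 - t) * a = (1 - t + t * a) / (1 - t) := by field_simp
  rw [hsplit, mul_div_assoc', one_lt_div h1t]
  have hgain : 0 < a - p - p * t * (a - 1) := by nlinarith
  calc 1 - t < (1 - p * t) * (1 - t + t * a) := by nlinarith [mul_pos ht0 hgain]
    _ ≤ (1 - t) ^ p * (1 - t + t * a) := mul_le_mul_of_nonneg_right hbernoulli (by nlinarith)

section InformationMatrix

variable {n : Type*} [Fintype n]

def informationMatrix (s : Finset (n → ℝ)) (w : (n → ℝ) → ℝ) : Matrix n n ℝ :=
  ∑ v ∈ s, w v • vecMulVec v v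

theorem posSemidef_informationMatrix {s : Finset (n → ℝ)} {w : (n → ℝ) → ℝ}
    (hw : ∀ v ∈ s, 0 ≤ w v) : (informationMatrix s w).PosSemidef :=
  posSemidef_sum s fun v hv => (posSemidef_vecMulVec_self_star v).smul (hw v hv)

theorem sum_mul_dotProduct_mulVec (M : Matrix n n ℝ) (s : Finset (n → ℝ)) (w : (n → ℝ) → ℝ) :
    ∑ v ∈ s, w v * (v ⬝ᵥ M *ᵥ v) = (M * informationMatrix s w).trace := by
  simp only [informationMatrix, Matrix.mul_sum, trace_sum, Matrix.mul_smul, trace_smul,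
    mul_vecMulVec, trace_vecMulVec, smul_eq_mul, dotProduct_comm]

variable [DecidableEq n]

theorem det_smul_add_smul_vecMulVec {S : Matrix n n ℝ} (hS : IsUnit S.det) {a : ℝ} (ha : a ≠ 0)
    (c : ℝ) (v : n → ℝ) :
    (a • S + c • vecMulVec v v).det =
      a ^ Fintype.card n * S.det * (1 + c / a * (v ⬝ᵥ S⁻¹ *ᵥ v)) := by
  have hdet : (a • S).det = a ^ Fintype.card n * S.det := det_smul S a
  have hunit : IsUnit (a • S).det := by
    rw [hdet]
    exact (isUnit_iff_ne_zero.2 (pow_ne_zero _ ha)).mul hS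
  have := invertibleOfNonzero ha
  rw [← smul_vecMulVec, det_add_vecMulVec_s12 hunit, hdet, Matrix.inv_smul S a hS, invOf_eq_inv]
  simp only [smul_mulVec, mulVec_smul, dotProduct_smul, smul_eq_mul]
  ring

theorem dotProduct_inv_mulVec_le_of_forall_det_le {s : Finset (n → ℝ)} {w : (n → ℝ) → ℝ} {k : ℝ}
    (hk : 0 < k) (hw : ∀ v ∈ s, 0 ≤ w v) (hsum : ∑ v ∈ s, w v = k)
    (hS : IsUnit (informationMatrix s w).det)
    (hopt : ∀ lam : (n → ℝ) → ℝ, (∀ v ∈ s, 0 ≤ lam v) → ∑ v ∈ s, lam v = k →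
      (informationMatrix s lam).det ≤ (informationMatrix s w).det)
    {v : n → ℝ} (hv : v ∈ s) :
    v ⬝ᵥ (informationMatrix s w)⁻¹ *ᵥ v ≤ Fintype.card n / k := by
  classical
  by_contra! hgt
  set S := informationMatrix s w
  have hdet_pos : 0 < S.det :=
    (posSemidef_informationMatrix hw).det_nonneg.lt_of_ne' hS.ne_zero
  obtain ⟨t, ht0, ht1, hgain⟩ := exists_one_lt_one_sub_pow_mul (Fintype.card n)
    (a := k * (v ⬝ᵥ S⁻¹ *ᵥ v)) (by rwa [div_lt_iff₀ hk, mul_comm] at hgt)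
  set lam : (n → ℝ) → ℝ := fun u => (1 - t) * w u + if u = v then t * k else 0
  have hlam_nonneg : ∀ u ∈ s, 0 ≤ lam u := fun u hu =>
    add_nonneg (mul_nonneg (by linarith) (hw u hu)) (by split_ifs <;> positivity)
  have hlam_sum : ∑ u ∈ s, lam u = k := by
    simp only [lam, Finset.sum_add_distrib, ← Finset.mul_sum, hsum, Finset.sum_ite_eq',
      if_pos hv]
    ring
  have hlam_matrix : informationMatrix s lam = (1 - t) • S + (t * k) • vecMulVec v v := by
    simp only [S, informationMatrix, lam, add_smul, ite_smul, zero_smul, Finset.sum_add_distrib,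
      Finset.sum_ite_eq', if_pos hv, mul_smul, Finset.smul_sum]
  have hle := hopt lam hlam_nonneg hlam_sum
  rw [hlam_matrix, det_smul_add_smul_vecMulVec hS (by linarith : 1 - t ≠ 0)] at hle
  have hrate : t * k / (1 - t) * (v ⬝ᵥ S⁻¹ *ᵥ v) = t / (1 - t) * (k * (v ⬝ᵥ S⁻¹ *ᵥ v)) := by
    ring
  rw [hrate, mul_comm _ S.det, mul_assoc] at hle
  linarith [lt_mul_of_one_lt_right hdet_pos hgain]

theorem div_le_sup'_dotProduct_inv_mulVec {s : Finset (n → ℝ)} (hs : s.Nonempty)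
    {w : (n → ℝ) → ℝ} {k : ℝ} (hk : 0 < k) (hw : ∀ v ∈ s, 0 ≤ w v) (hsum : ∑ v ∈ s, w v = k)
    (hS : IsUnit (informationMatrix s w).det) :
    Fintype.card n / k ≤ s.sup' hs (fun v => v ⬝ᵥ (informationMatrix s w)⁻¹ *ᵥ v) := by
  set S := informationMatrix s w
  rw [div_le_iff₀ hk]
  calc (Fintype.card n : ℝ) = (S⁻¹ * S).trace := by rw [nonsing_inv_mul S hS, trace_one]
    _ = ∑ v ∈ s, w v * (v ⬝ᵥ S⁻¹ *ᵥ v) := (sum_mul_dotProduct_mulVec _ s w).symm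
    _ ≤ ∑ v ∈ s, w v * s.sup' hs (fun v => v ⬝ᵥ S⁻¹ *ᵥ v) :=
        Finset.sum_le_sum fun v hv => mul_le_mul_of_nonneg_left
          (Finset.le_sup' (fun v => v ⬝ᵥ S⁻¹ *ᵥ v) hv) (hw v hv)
    _ = s.sup' hs (fun v => v ⬝ᵥ S⁻¹ *ᵥ v) * k := by rw [← Finset.sum_mul, hsum, mul_comm]

end InformationMatrix

theorem relaxation_optimality_leverage_general
    (p : ℕ) (P' : Finset (Fin p → ℝ)) (hP' : P'.Nonempty)
    (k : ℝ) (hk : 0 < k) (lamStar : (Fin p → ℝ) → ℝ)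
    (hnn : ∀ v ∈ P', 0 ≤ lamStar v) (hsum : ∑ v ∈ P', lamStar v = k)
    (Sstar : Matrix (Fin p) (Fin p) ℝ)
    (hSstar : Sstar = ∑ v ∈ P', lamStar v • vecMulVec v v)
    (hinv : IsUnit Sstar.det)
    (hopt : ∀ lam : (Fin p → ℝ) → ℝ, (∀ v ∈ P', 0 ≤ lam v) →
      (∑ v ∈ P', lam v = k) →
      (∑ v ∈ P', lam v • vecMulVec v v).det ≤ Sstar.det) :
    P'.sup' hP' (fun v => v ⬝ᵥ Sstar⁻¹ *ᵥ v) = (p : ℝ) / k := by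
  change Sstar = informationMatrix P' lamStar at hSstar
  subst hSstar
  refine le_antisymm (Finset.sup'_le _ _ fun v hv => ?_) ?_
  · simpa only [Fintype.card_fin] using
      dotProduct_inv_mulVec_le_of_forall_det_le hk hnn hsum hinv hopt hv
  · simpa only [Fintype.card_fin] using div_le_sup'_dotProduct_inv_mulVec hP' hk hnn hsum hinv

/-- KKT characterization: at an optimum of the continuous relaxation, the maximal
leverage score max_{v ∈ P′} vᵀ(S*)⁻¹v equals p/k. -/
theorem relaxation_optimality_leverage
    (p : ℕ) (hp : 1 ≤ p) (P' : Finset (Fin p → ℝ)) (hP' : P'.Nonempty)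
    (k : ℝ) (hk : 0 < k) (lamStar : (Fin p → ℝ) → ℝ)
    (hnn : ∀ v ∈ P', 0 ≤ lamStar v) (hsum : ∑ v ∈ P', lamStar v = k)
    (Sstar : Matrix (Fin p) (Fin p) ℝ)
    (hSstar : Sstar = ∑ v ∈ P', lamStar v • vecMulVec v v)
    (hinv : IsUnit Sstar.det)
    (hopt : ∀ lam : (Fin p → ℝ) → ℝ, (∀ v ∈ P', 0 ≤ lam v) →
      (∑ v ∈ P', lam v = k) →
      (∑ v ∈ P', lam v • vecMulVec v v).det ≤ Sstar.det) :
    P'.sup' hP' (fun v => v ⬝ᵥ Sstar⁻¹ *ᵥ v) = (p : ℝ) / k :=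
  relaxation_optimality_leverage_general p P' hP' k hk lamStar hnn hsum Sstar hSstar hinv hopt
end
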